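/- arXiv:2006.08563 — 3 statements merged into one kernel-verified Lean document; each statement's English description precedes it below -/
import Mathlib

section
/- Let n_1, n_2, …, n_s be positive integers with gcd(n_1, n_2, …, n_s) = 1, and let g(z) = 1 − (z^{n_1} + z^{n_2} + … + z^{n_s}). Then g has a unique complex root α of smallest modulus; moreover, α is the unique positive real root of g, and α is a root of multiplicity one. -/
/-!
Let `α` be the positive real solution of `∑ xⁿⁱ = 1`, which exists and is unique because the
left side increases strictly from `0` to at least `1` on `[0, 1]`. If `z` is a complex root with
`‖z‖ ≤ α`, the triangle inequality gives `1 ≤ ∑ ‖z‖ⁿⁱ`, so `‖z‖ = α` and the triangle inequality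
is an equality: every `zⁿⁱ` is a nonnegative real, hence `zⁿⁱ = αⁿⁱ`. Then `z / α` is a root of
unity whose order divides every `nᵢ`, so `z = α` since `gcd nᵢ = 1`. The root is simple because
`g'(α) = -∑ nᵢ αⁿⁱ⁻¹ < 0`.
-/

open Polynomial Finset
open scoped ComplexOrder

theorem Polynomial.rootMultiplicity_eq_one_of_eval_derivative_ne_zero {R : Type*} [CommRing R]
    {p : R[X]} {a : R} (hroot : p.IsRoot a) (hderiv : (derivative p).eval a ≠ 0) :
    p.rootMultiplicity a = 1 := by
  have hp : p ≠ 0 := by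
    rintro rfl
    simp at hderiv
  have hpos : 0 < p.rootMultiplicity a := (rootMultiplicity_pos hp).mpr hroot
  have hle : ¬1 < p.rootMultiplicity a := fun h =>
    hderiv ((one_lt_rootMultiplicity_iff_isRoot hp).mp h).2
  omega

theorem Complex.nonneg_of_re_sum_eq_sum_norm {ι : Type*} {s : Finset ι} {w : ι → ℂ}
    (h : (∑ i ∈ s, w i).re = ∑ i ∈ s, ‖w i‖) : ∀ i ∈ s, 0 ≤ w i := by
  rw [Complex.re_sum] at h
  intro i hi
  exact Complex.re_eq_norm.mp
    ((sum_eq_sum_iff_of_le fun j _ => Complex.re_le_norm (w j)).mp h i hi)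

theorem eq_one_of_pow_eq_one_of_gcd_eq_one {M ι : Type*} [Monoid M] {s : Finset ι} {n : ι → ℕ}
    {x : M} (hx : ∀ i ∈ s, x ^ n i = 1) (hgcd : s.gcd n = 1) : x = 1 := by
  have hdvd : orderOf x ∣ s.gcd n := dvd_gcd fun i hi => orderOf_dvd_of_pow_eq_one (hx i hi)
  rwa [hgcd, Nat.dvd_one, orderOf_eq_one_iff] at hdvd

section SumPow

variable {ι : Type*} {s : Finset ι} {n : ι → ℕ}

theorem isRoot_one_sub_sum_X_pow_iff {R : Type*} [CommRing R] {z : R} :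
    (1 - ∑ i ∈ s, X ^ n i : R[X]).IsRoot z ↔ ∑ i ∈ s, z ^ n i = 1 := by
  simp only [IsRoot, eval_sub, eval_one, eval_finsetSum, eval_pow, eval_X]
  exact sub_eq_zero.trans eq_comm

theorem eval_derivative_one_sub_sum_X_pow {R : Type*} [CommRing R] (z : R) :
    (derivative (1 - ∑ i ∈ s, X ^ n i : R[X])).eval z = -∑ i ∈ s, (n i : R) * z ^ (n i - 1) := by
  simp [eval_finsetSum, derivative_X_pow]

theorem strictMonoOn_sum_pow (hs : s.Nonempty) (hn : ∀ i ∈ s, n i ≠ 0) :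
    StrictMonoOn (fun x : ℝ => ∑ i ∈ s, x ^ n i) (Set.Ici 0) :=
  fun _ ha _ _ hab => sum_lt_sum_of_nonempty hs fun i hi => pow_lt_pow_left₀ hab ha (hn i hi)

theorem exists_pos_sum_pow_eq_one (hs : s.Nonempty) (hn : ∀ i ∈ s, n i ≠ 0) :
    ∃ α : ℝ, 0 < α ∧ ∑ i ∈ s, α ^ n i = 1 := by
  have hzero : ∑ i ∈ s, (0 : ℝ) ^ n i = 0 := sum_eq_zero fun i hi => zero_pow (hn i hi)
  have hone : (1 : ℝ) ≤ ∑ i ∈ s, (1 : ℝ) ^ n i := by simpa using hs.card_pos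
  obtain ⟨α, hα, hsum⟩ := intermediate_value_Icc zero_le_one
    (f := fun x : ℝ => ∑ i ∈ s, x ^ n i) (by fun_prop) ⟨hzero.le.trans zero_le_one, hone⟩
  refine ⟨α, hα.1.lt_of_ne ?_, hsum⟩
  rintro rfl
  simp_all

theorem eq_of_sum_pow_eq_one_of_norm_le (hs : s.Nonempty) (hn : ∀ i ∈ s, n i ≠ 0)
    (hgcd : s.gcd n = 1) {α : ℝ} (hα : 0 < α) (hαsum : ∑ i ∈ s, α ^ n i = 1) {z : ℂ}
    (hz : ∑ i ∈ s, z ^ n i = 1) (hle : ‖z‖ ≤ α) : z = α := by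
  have hnorm : ‖z‖ = α := by
    refine hle.antisymm (not_lt.mp fun hlt => ?_)
    have hmono := strictMonoOn_sum_pow hs hn (norm_nonneg z) hα.le hlt
    have htri : (1 : ℝ) ≤ ∑ i ∈ s, ‖z‖ ^ n i := by
      simpa [hz] using norm_sum_le s fun i => z ^ n i
    simp only [hαsum] at hmono
    linarith
  have hnonneg : ∀ i ∈ s, 0 ≤ z ^ n i := Complex.nonneg_of_re_sum_eq_sum_norm <| by
    simp only [hz, norm_pow, hnorm, hαsum, Complex.one_re]
  have hα' : (α : ℂ) ≠ 0 := by exact_mod_cast hα.ne'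
  have hpow : ∀ i ∈ s, (z / α) ^ n i = 1 := by
    intro i hi
    rw [div_pow, Complex.eq_coe_norm_of_nonneg (hnonneg i hi), norm_pow, hnorm,
      Complex.ofReal_pow, div_self (pow_ne_zero _ hα')]
  simpa [div_eq_one_iff_eq hα'] using eq_one_of_pow_eq_one_of_gcd_eq_one hpow hgcd

end SumPow

/-- **Lemma 2.8.** Let `n₁, …, n_s` be positive integers with `gcd(n₁, …, n_s) = 1`.  Then the
polynomial `g(z) = 1 - (z^{n₁} + ⋯ + z^{n_s})` has a unique complex root `α` of smallest
modulus; moreover `α` is the unique positive real root of `g`, and `α` has multiplicity one. -/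
theorem unique_smallest_root {s : ℕ} (hs : 0 < s) (n : Fin s → ℕ) (hn : ∀ i, 0 < n i)
    (hgcd : Finset.univ.gcd n = 1)
    (g : Polynomial ℂ) (hg : g = 1 - ∑ i : Fin s, Polynomial.X ^ n i) :
    ∃ α : ℂ, g.IsRoot α ∧ 0 < α.re ∧ α.im = 0 ∧
      (∀ z : ℂ, g.IsRoot z → z ≠ α → ‖α‖ < ‖z‖) ∧
      (∀ x : ℝ, 0 < x → g.IsRoot (x : ℂ) → (x : ℂ) = α) ∧
      g.rootMultiplicity α = 1 := by
  subst hg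
  have hne : (univ : Finset (Fin s)).Nonempty := univ_nonempty_iff.mpr ⟨⟨0, hs⟩⟩
  have hn' : ∀ i ∈ univ, n i ≠ 0 := fun i _ => (hn i).ne'
  obtain ⟨α, hα, hαsum⟩ := exists_pos_sum_pow_eq_one hne hn'
  have hroot_real : ∀ x : ℝ, (1 - ∑ i, X ^ n i : ℂ[X]).IsRoot (x : ℂ) ↔ ∑ i, x ^ n i = 1 := by
    intro x
    rw [isRoot_one_sub_sum_X_pow_iff]
    exact_mod_cast Iff.rfl
  refine ⟨α, (hroot_real α).mpr hαsum, by simpa using hα, by simp, ?_, ?_, ?_⟩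
  · intro z hz hzα
    rw [Complex.norm_real, Real.norm_of_nonneg hα.le]
    exact not_le.mp fun hle => hzα <| eq_of_sum_pow_eq_one_of_norm_le hne hn' hgcd hα hαsum
      (isRoot_one_sub_sum_X_pow_iff.mp hz) hle
  · intro x hx hxroot
    exact congrArg _ <| (strictMonoOn_sum_pow hne hn').injOn hx.le hα.le <|
      ((hroot_real x).mp hxroot).trans hαsum.symm
  · refine rootMultiplicity_eq_one_of_eval_derivative_ne_zero ((hroot_real α).mpr hαsum) ?_
    rw [eval_derivative_one_sub_sum_X_pow, neg_ne_zero]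
    exact_mod_cast (sum_pos (fun i _ => mul_pos (by exact_mod_cast hn i) (pow_pos hα _)) hne).ne'
end

section
/- Let S = {φ_1, …, φ_s} be a set of polynomials defined over a field K of characteristic zero, and let a_i·x^{d_i} denote the leading term of φ_i. If {d_1, …, d_s} is a multiplicatively independent set of integers and {a_1, …, a_s} is a multiplicatively independent set in K*, then the monoid M_S generated by S under composition is free with basis S: whenever θ_1 ∘ … ∘ θ_n = τ_1 ∘ … ∘ τ_m with all θ_i, τ_j ∈ S, one has n = m and θ_i = τ_i for all i. -/
/-!
Write `φ_I = φ_{i₁} ∘ ⋯ ∘ φ_{iₙ}` for a word `I = i₁ ⋯ iₙ`. Since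
`lc (f ∘ g) = lc f · (lc g) ^ deg f`, the leading coefficient of `φ_I` is a monomial
`∏ aₜ ^ eₜ(I)` in the `aₜ`, and by the independence of the `aₜ` the exponent vector `e(I)` is an
invariant of the polynomial `φ_I`. The last letter `i` of `I = A i` is read off from it: all
degrees are at least `2` (a degree `1` would contradict the independence of the `dᵢ`), so
`eᵢ(I) ≥ deg φ_A` while `eₜ(I) < deg φ_A` for `t ≠ i`. Cancelling `φ_i` on the right, which is
possible for a non-constant polynomial, and inducting on the length finishes the proof.
-/

open Polynomial

namespace Polynomial

variable {R : Type*}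

theorem natDegree_foldr_comp [Semiring R] [NoZeroDivisors R] [Nontrivial R] (L : List R[X]) :
    (L.foldr comp X).natDegree = (L.map natDegree).prod := by
  induction L with
  | nil => simp
  | cons p L ih => simp [natDegree_comp, ih]

theorem comp_left_injective [Ring R] [NoZeroDivisors R] {q : R[X]} (hq : q.natDegree ≠ 0) :
    Function.Injective fun p : R[X] => p.comp q := by
  intro f g hfg
  have hcomp : (f - g).comp q = 0 := by simpa [sub_comp, sub_eq_zero] using hfg
  obtain hfg | ⟨-, hC⟩ := comp_eq_zero_iff.mp hcomp
  · exact sub_eq_zero.mp hfg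
  · exact absurd (by rw [hC, natDegree_C]) hq

end Polynomial

section MulIndependent

variable {ι G : Type*} [Fintype ι]

def MulIndependent [DivisionCommMonoid G] (a : ι → G) : Prop :=
  ∀ k : ι → ℤ, ∏ i, a i ^ k i = 1 → ∀ i, k i = 0

theorem MulIndependent.ne_one [DivisionCommMonoid G] [DecidableEq ι] {a : ι → G}
    (ha : MulIndependent a) (i : ι) : a i ≠ 1 := by
  intro hi
  have hprod : ∏ j, a j ^ (Pi.single i 1 : ι → ℤ) j = 1 := by
    rw [Fintype.prod_eq_single i fun j hj => by simp [hj]]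
    simp [hi]
  simpa using ha _ hprod i

theorem MulIndependent.pow_injective [CommGroupWithZero G] {a : ι → G}
    (ha : MulIndependent a) (ha₀ : ∀ i, a i ≠ 0) {m n : ι → ℕ}
    (h : ∏ i, a i ^ m i = ∏ i, a i ^ n i) : m = n := by
  funext i
  have := ha (fun i => (m i : ℤ) - n i) ?_ i
  · omega
  · simp_rw [zpow_sub₀ (ha₀ _), zpow_natCast, Finset.prod_div_distrib, h]
    exact div_self (Finset.prod_ne_zero_iff.mpr fun i _ => pow_ne_zero _ (ha₀ i))

end MulIndependent

section LeadingExponents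

variable {ι : Type*} [DecidableEq ι] (d : ι → ℕ)

/-- `lcExponents d I t` is the exponent of `a t` in the leading coefficient of the composite
`φ_{I₀} ∘ φ_{I₁} ∘ ⋯` of polynomials `φ i` of degree `d i` and leading coefficient `a i`. -/
def lcExponents : List ι → ι → ℕ
  | [] => 0
  | j :: I => Pi.single j 1 + d j • lcExponents I

theorem lcExponents_eq_zero_iff {I : List ι} : lcExponents d I = 0 ↔ I = [] := by
  refine ⟨fun h => ?_, fun h => h ▸ rfl⟩
  cases I with
  | nil => rfl
  | cons j I => simpa [lcExponents] using congrFun h j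

theorem lcExponents_append_singleton (I : List ι) (i : ι) :
    lcExponents d (I ++ [i]) = lcExponents d I + (I.map d).prod • Pi.single i 1 := by
  induction I with
  | nil => simp [lcExponents]
  | cons j I ih => simp [lcExponents, ih, smul_add, mul_smul, add_assoc]

theorem lcExponents_lt_prod (hd : ∀ i, 2 ≤ d i) (I : List ι) (t : ι) :
    lcExponents d I t < (I.map d).prod := by
  induction I with
  | nil => simp [lcExponents]
  | cons j I ih =>
    have hsingle : Pi.single (M := fun _ => ℕ) j 1 t ≤ 1 := by
      rw [Pi.single_apply]; split <;> omega
    simp only [lcExponents, Pi.add_apply, Pi.smul_apply, smul_eq_mul, List.map_cons,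
      List.prod_cons]
    nlinarith [hd j]

theorem eq_of_lcExponents_append_singleton_eq (hd : ∀ i, 2 ≤ d i) {A B : List ι} {i j : ι}
    (h : lcExponents d (A ++ [i]) = lcExponents d (B ++ [j])) : i = j := by
  by_contra hij
  -- `|A| ≤ eᵢ(A i) = eᵢ(B j) < |B| ≤ e_j(B j) = e_j(A i) < |A|`, with `|·|` the degree product
  have hi := congrFun h i
  have hj := congrFun h j
  simp only [lcExponents_append_singleton, Pi.add_apply, Pi.smul_apply, Pi.single_eq_same,
    Pi.single_eq_of_ne hij, Pi.single_eq_of_ne (Ne.symm hij), smul_eq_mul, mul_one, mul_zero,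
    add_zero] at hi hj
  have := lcExponents_lt_prod d hd A j
  have := lcExponents_lt_prod d hd B i
  omega

end LeadingExponents

namespace Polynomial

theorem foldr_comp_append_singleton {R : Type*} [CommSemiring R] (L : List R[X]) (p : R[X]) :
    (L ++ [p]).foldr comp X = (L.foldr comp X).comp p := by
  induction L with
  | nil => simp
  | cons q L ih => simp [ih, comp_assoc]

variable {ι : Type*} [Fintype ι] [DecidableEq ι]

theorem leadingCoeff_foldr_comp_map {R : Type*} [CommSemiring R] [NoZeroDivisors R]
    [Nontrivial R] {φ : ι → R[X]} (hφ : ∀ i, 0 < (φ i).natDegree) (I : List ι) :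
    ((I.map φ).foldr comp X).leadingCoeff =
      ∏ t, (φ t).leadingCoeff ^ lcExponents (fun i => (φ i).natDegree) I t := by
  induction I with
  | nil => simp [lcExponents]
  | cons j I ih =>
    have hrest : ((I.map φ).foldr comp X).natDegree ≠ 0 := by
      rw [natDegree_foldr_comp, List.map_map]
      exact (List.prod_pos fun n hn => by
        obtain ⟨i, -, rfl⟩ := List.mem_map.mp hn; exact hφ i).ne'
    simp only [List.map_cons, List.foldr_cons, leadingCoeff_comp hrest, ih, lcExponents,
      Pi.add_apply, Pi.smul_apply, smul_eq_mul, pow_add, Finset.prod_mul_distrib, pow_mul',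
      Finset.prod_pow, Pi.single_apply, pow_ite, pow_one, pow_zero, Finset.prod_ite_eq',
      Finset.mem_univ, if_true]

theorem foldr_comp_map_injective {K : Type*} [Field K] {φ : ι → K[X]}
    (hφ : ∀ i, 2 ≤ (φ i).natDegree) (hind : MulIndependent fun i => (φ i).leadingCoeff) :
    Function.Injective fun I : List ι => (I.map φ).foldr comp X := by
  have hpos : ∀ i, 0 < (φ i).natDegree := fun i => by linarith [hφ i]
  have hlc₀ : ∀ i, (φ i).leadingCoeff ≠ 0 := fun i =>
    leadingCoeff_ne_zero.mpr (ne_zero_of_natDegree_gt (hpos i))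
  have hexp : ∀ {I J : List ι}, (I.map φ).foldr comp X = (J.map φ).foldr comp X →
      lcExponents (fun i => (φ i).natDegree) I = lcExponents (fun i => (φ i).natDegree) J :=
    fun h => hind.pow_injective hlc₀ <| by
      rw [← leadingCoeff_foldr_comp_map hpos, ← leadingCoeff_foldr_comp_map hpos, h]
  intro I J h
  induction I using List.reverseRecOn generalizing J with
  | nil => exact ((lcExponents_eq_zero_iff _).mp (hexp h).symm).symm
  | append_singleton A i ih =>
    obtain rfl | ⟨B, j, rfl⟩ := List.eq_nil_or_concat J
    · exact (lcExponents_eq_zero_iff _).mp (hexp h)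
    · rw [List.concat_eq_append] at h ⊢
      obtain rfl := eq_of_lcExponents_append_singleton_eq _ hφ (hexp h)
      simp only [List.map_append, List.map_singleton, foldr_comp_append_singleton] at h
      rw [ih (comp_left_injective (hpos i).ne' h)]

end Polynomial

theorem free_monoid_of_multiplicatively_independent_general {K : Type*} [Field K]
    {s : ℕ} (φ : Fin s → Polynomial K) (d : Fin s → ℕ) (a : Fin s → K)
    (hdeg : ∀ i, (φ i).natDegree = d i) (hlc : ∀ i, (φ i).leadingCoeff = a i)
    (hdpos : ∀ i, 0 < d i)
    (hdind : ∀ k : Fin s → ℤ, (∏ i, (d i : ℚ) ^ k i) = 1 → ∀ i, k i = 0)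
    (haind : ∀ k : Fin s → ℤ, (∏ i, a i ^ k i) = 1 → ∀ i, k i = 0) :
    ∀ L₁ L₂ : List (Polynomial K),
      (∀ p ∈ L₁, p ∈ Set.range φ) → (∀ p ∈ L₂, p ∈ Set.range φ) →
      L₁.foldr Polynomial.comp Polynomial.X = L₂.foldr Polynomial.comp Polynomial.X →
      L₁ = L₂ := by
  obtain rfl : (fun i => (φ i).natDegree) = d := funext hdeg
  obtain rfl : (fun i => (φ i).leadingCoeff) = a := funext hlc
  have hφ : ∀ i, 2 ≤ (φ i).natDegree := fun i => by
    have hne : (φ i).natDegree ≠ 1 := by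
      exact_mod_cast (show MulIndependent fun i => ((φ i).natDegree : ℚ) from hdind).ne_one i
    have : 0 < (φ i).natDegree := hdpos i
    omega
  intro L₁ L₂ hL₁ hL₂ h
  obtain ⟨I₁, rfl⟩ : L₁ ∈ Set.range (List.map φ) := by rwa [Set.range_list_map]
  obtain ⟨I₂, rfl⟩ : L₂ ∈ Set.range (List.map φ) := by rwa [Set.range_list_map]
  exact congrArg _ (foldr_comp_map_injective hφ haind h)

/-- **Theorem 4.3.** Let `S = {φ₁, …, φ_s}` be a set of polynomials over a field `K` of
characteristic zero with leading terms `aᵢ x^{dᵢ}`.  If the degrees `dᵢ` are multiplicatively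
independent (in the positive rationals) and the leading coefficients `aᵢ` are multiplicatively
independent in `K*`, then the monoid generated by `S` under composition is free with basis
`S`. -/
theorem free_monoid_of_multiplicatively_independent {K : Type*} [Field K] [CharZero K]
    {s : ℕ} (φ : Fin s → Polynomial K) (d : Fin s → ℕ) (a : Fin s → K)
    (hdeg : ∀ i, (φ i).natDegree = d i) (hlc : ∀ i, (φ i).leadingCoeff = a i)
    (hdpos : ∀ i, 0 < d i) (hane : ∀ i, a i ≠ 0)
    (hdind : ∀ k : Fin s → ℤ, (∏ i, (d i : ℚ) ^ k i) = 1 → ∀ i, k i = 0)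
    (haind : ∀ k : Fin s → ℤ, (∏ i, a i ^ k i) = 1 → ∀ i, k i = 0) :
    ∀ L₁ L₂ : List (Polynomial K),
      (∀ p ∈ L₁, p ∈ Set.range φ) → (∀ p ∈ L₂, p ∈ Set.range φ) →
      L₁.foldr Polynomial.comp Polynomial.X = L₂.foldr Polynomial.comp Polynomial.X →
      L₁ = L₂ :=
  free_monoid_of_multiplicatively_independent_general φ d a hdeg hlc hdpos hdind haind
end

section
/- Let S = {φ_1, …, φ_s} be a set of monomials φ_i = a_i·x^{d_i} over a field K of characteristic zero, where {d_1, …, d_s} is multiplicatively independent in the integers and {a_1, …, a_s} is multiplicatively independent in K*, and let θ = a·x^d be an element of S (so a = a_i for some i). Then: (1) if f_1, f_2, g ∈ M_S satisfy deg_a(f_1) ≤ deg_a(f_2) and deg(f_1) ≤ deg(f_2), then deg_a(f_1 ∘ g) ≤ deg_a(f_2 ∘ g); and (2) if f ∈ M_S and the number e = e_θ(f) of occurrences of θ in the unique expression of f as a composition of elements of S satisfies e ≥ 1, then deg_a(f) ≤ ((d^e − 1)/(d − 1))·(deg(f)/d^e). -/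
/-!
Compositions of monomials are monomials, and by multiplicative independence of the `aᵢ` the
exponent of `a = a_{i₀}` in the leading coefficient obeys
`deg_a (φⱼ ∘ f) = [j = i₀] + dⱼ · deg_a f`. Unfolding this along a word gives
`deg_a (f ∘ g) = deg_a f + deg f · deg_a g`, which is (1). For (2), the same recursion together
with `d^e ≤ deg f` yields `deg_a f · d^e ≤ (1 + d + ⋯ + d^{e-1}) · deg f` by induction on `f`;
the geometric sum is `(d^e - 1)/(d - 1)` because independence of the `dᵢ` forces `d ≠ 1`.
-/

open Polynomial Finset

def MultiplicativelyIndependent {G ι : Type*} [DivisionCommMonoid G] [Fintype ι] (a : ι → G) :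
    Prop :=
  ∀ k : ι → ℤ, ∏ i, a i ^ k i = 1 → ∀ i, k i = 0

namespace MultiplicativelyIndependent

variable {G ι : Type*} [Fintype ι] {a : ι → G}

theorem ne_one [DivisionCommMonoid G] (hind : MultiplicativelyIndependent a) (i : ι) :
    a i ≠ 1 := by
  classical
  intro h
  have := hind (Pi.single i 1) (by
    rw [prod_eq_single i (fun j _ hj => by simp [hj]) (by simp)]
    simp [h]) i
  simp at this

theorem eq_of_prod_pow_eq [CommGroupWithZero G] (hind : MultiplicativelyIndependent a)
    (ha : ∀ i, a i ≠ 0) {m n : ι → ℕ} (h : ∏ i, a i ^ m i = ∏ i, a i ^ n i) : m = n := by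
  have hquot : ∏ i, a i ^ ((m i : ℤ) - n i) = 1 := by
    simp only [zpow_sub₀ (ha _), zpow_natCast, prod_div_distrib, h]
    exact div_self (prod_ne_zero_iff.2 fun i _ => pow_ne_zero _ (ha i))
  funext i
  exact_mod_cast sub_eq_zero.1 (hind _ hquot i)

end MultiplicativelyIndependent

theorem C_mul_X_pow_comp_C_mul_X_pow {R : Type*} [CommSemiring R] (a b : R) (m n : ℕ) :
    (C a * X ^ m).comp (C b * X ^ n) = C (a * b ^ m) * X ^ (m * n) := by
  simp only [mul_comp, C_comp, X_pow_comp, mul_pow, ← C_pow, ← pow_mul, C_mul, mul_assoc,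
    mul_comm n]

section ADegree

variable {ι : Type*} [DecidableEq ι] (d : ι → ℕ)

-- The paper's `deg_{aᵢ}`: the leading coefficient of `(C a * X ^ n).comp f` is
-- `a * f.leadingCoeff ^ n`.
def aDegree (i : ι) : List ι → ℕ
  | [] => 0
  | j :: L => (if j = i then 1 else 0) + d j * aDegree i L

@[simp] theorem aDegree_nil (i : ι) : aDegree d i [] = 0 := rfl

@[simp] theorem aDegree_cons (i j : ι) (L : List ι) :
    aDegree d i (j :: L) = (if j = i then 1 else 0) + d j * aDegree d i L := rfl

theorem aDegree_append (i : ι) (L G : List ι) :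
    aDegree d i (L ++ G) = aDegree d i L + (L.map d).prod * aDegree d i G := by
  induction L with
  | nil => simp
  | cons j L ih =>
    simp only [List.cons_append, aDegree_cons, ih, List.map_cons, List.prod_cons]
    ring

theorem pow_count_le_prod_map (hd : ∀ j, 0 < d j) (i : ι) (L : List ι) :
    d i ^ L.count i ≤ (L.map d).prod := by
  induction L with
  | nil => simp
  | cons j L ih =>
    rw [List.count_cons, List.map_cons, List.prod_cons]
    split_ifs with h
    · rw [beq_iff_eq.1 h, pow_succ']; gcongr
    · simpa using Nat.mul_le_mul (hd j) ih

theorem aDegree_mul_pow_count_le (hd : ∀ j, 0 < d j) (i : ι) (L : List ι) :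
    aDegree d i L * d i ^ L.count i ≤ (∑ k ∈ range (L.count i), d i ^ k) * (L.map d).prod := by
  induction L with
  | nil => simp
  | cons j L ih =>
    rw [List.count_cons, List.map_cons, List.prod_cons, aDegree_cons]
    by_cases h : j = i
    · subst h
      simp only [if_true, beq_self_eq_true, geom_sum_succ, pow_succ]
      calc (1 + d j * aDegree d j L) * (d j ^ L.count j * d j)
          = d j * d j ^ L.count j + d j * d j * (aDegree d j L * d j ^ L.count j) := by ring
        _ ≤ d j * (L.map d).prod +
            d j * d j * ((∑ k ∈ range (L.count j), d j ^ k) * (L.map d).prod) := by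
          gcongr
          exact pow_count_le_prod_map d hd j L
        _ = _ := by ring
    · simp only [h, if_false, beq_iff_eq, add_zero, zero_add]
      calc d j * aDegree d i L * d i ^ L.count i
          = d j * (aDegree d i L * d i ^ L.count i) := by ring
        _ ≤ d j * ((∑ k ∈ range (L.count i), d i ^ k) * (L.map d).prod) := by gcongr
        _ = _ := by ring

end ADegree

section MonomialComposition

variable {R ι : Type*} [CommSemiring R] [Fintype ι] [DecidableEq ι] (a : ι → R) (d : ι → ℕ)

theorem foldr_comp_monomials (L : List ι) :
    (L.map fun i => C (a i) * X ^ d i).foldr comp X =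
      C (∏ i, a i ^ aDegree d i L) * X ^ (L.map d).prod := by
  induction L with
  | nil => simp
  | cons j L ih =>
    rw [List.map_cons, List.foldr_cons, ih, C_mul_X_pow_comp_C_mul_X_pow, List.map_cons,
      List.prod_cons]
    simp only [aDegree_cons, pow_add, prod_mul_distrib, pow_mul', prod_pow, pow_boole,
      prod_ite_eq, mem_univ, if_true]

theorem leadingCoeff_foldr_comp_monomials (L : List ι) :
    ((L.map fun i => C (a i) * X ^ d i).foldr comp X).leadingCoeff =
      ∏ i, a i ^ aDegree d i L := by
  rw [foldr_comp_monomials, leadingCoeff_C_mul_X_pow]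

theorem natDegree_foldr_comp_monomials {L : List ι} (h : ∏ i, a i ^ aDegree d i L ≠ 0) :
    ((L.map fun i => C (a i) * X ^ d i).foldr comp X).natDegree = (L.map d).prod := by
  rw [foldr_comp_monomials, natDegree_C_mul_X_pow _ _ h]

end MonomialComposition

theorem a_degree_estimates_general {K : Type*} [Field K] {s : ℕ}
    (a : Fin s → K) (d : Fin s → ℕ)
    (hdpos : ∀ i, 0 < d i) (hane : ∀ i, a i ≠ 0)
    (hdind : ∀ k : Fin s → ℤ, (∏ i, (d i : ℚ) ^ k i) = 1 → ∀ i, k i = 0)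
    (haind : ∀ k : Fin s → ℤ, (∏ i, a i ^ k i) = 1 → ∀ i, k i = 0)
    (φ : Fin s → Polynomial K) (hφ : ∀ i, φ i = Polynomial.C (a i) * Polynomial.X ^ d i)
    (A : List (Fin s) → Fin s → ℕ)
    (hA : ∀ L : List (Fin s),
      ((L.map φ).foldr Polynomial.comp Polynomial.X).leadingCoeff = ∏ i, a i ^ A L i)
    (i₀ : Fin s) :
    (∀ L₁ L₂ G : List (Fin s),
      A L₁ i₀ ≤ A L₂ i₀ →
      ((L₁.map φ).foldr Polynomial.comp Polynomial.X).natDegree ≤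
        ((L₂.map φ).foldr Polynomial.comp Polynomial.X).natDegree →
      A (L₁ ++ G) i₀ ≤ A (L₂ ++ G) i₀) ∧
    (∀ L : List (Fin s), 1 ≤ L.count i₀ →
      (A L i₀ : ℚ) ≤
        (((d i₀ : ℚ) ^ L.count i₀ - 1) / ((d i₀ : ℚ) - 1)) *
          ((((L.map φ).foldr Polynomial.comp Polynomial.X).natDegree : ℚ) /
            (d i₀ : ℚ) ^ L.count i₀)) := by
  obtain rfl : φ = fun i => C (a i) * X ^ d i := funext hφ
  have hA_eq : ∀ L, A L = fun i => aDegree d i L := fun L =>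
    MultiplicativelyIndependent.eq_of_prod_pow_eq haind hane
      ((hA L).symm.trans (leadingCoeff_foldr_comp_monomials a d L))
  have hdeg : ∀ L : List (Fin s),
      ((L.map fun i => C (a i) * X ^ d i).foldr comp X).natDegree = (L.map d).prod := fun L =>
    natDegree_foldr_comp_monomials a d (prod_ne_zero_iff.2 fun i _ => pow_ne_zero _ (hane i))
  refine ⟨fun L₁ L₂ G hA₁₂ hdeg₁₂ => ?_, fun L _ => ?_⟩
  · simp only [hA_eq, hdeg, aDegree_append] at hA₁₂ hdeg₁₂ ⊢
    gcongr
  · have hd₀ : (d i₀ : ℚ) ≠ 1 := MultiplicativelyIndependent.ne_one hdind i₀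
    have hpow : (0 : ℚ) < (d i₀ : ℚ) ^ L.count i₀ := pow_pos (Nat.cast_pos.2 (hdpos i₀)) _
    rw [hA_eq, hdeg, ← geom_sum_eq hd₀, ← mul_div_assoc, le_div_iff₀ hpow]
    exact_mod_cast aDegree_mul_pow_count_le d hdpos i₀ L

/-- **Lemma 4.5.** Let `S = {φ₁, …, φ_s}` be a set of monomials `φᵢ = aᵢ x^{dᵢ}` over a field
`K` of characteristic zero, with the `dᵢ` multiplicatively independent in the integers and the
`aᵢ` multiplicatively independent in `K*`, and let `θ = a x^d ∈ S` (so `a = a_{i₀}`,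
`d = d_{i₀}`).  Elements of the free monoid `M_S` are represented by lists of indices, composed
outermost-first; `A L i` is the exponent of `aᵢ` in the leading coefficient of the composition
of `L` (the `aᵢ`-degree), characterized by `leadingCoeff (comp L) = ∏ᵢ aᵢ^{A L i}`.  Then:
(1) if `deg_a f₁ ≤ deg_a f₂` and `deg f₁ ≤ deg f₂`, then `deg_a (f₁ ∘ g) ≤ deg_a (f₂ ∘ g)`;
(2) if `e = e_θ(f) ≥ 1` occurrences of `θ` appear in `f`, then
`deg_a f ≤ ((dᵉ - 1)/(d - 1)) (deg f)/dᵉ`. -/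
theorem a_degree_estimates {K : Type*} [Field K] [CharZero K] {s : ℕ}
    (a : Fin s → K) (d : Fin s → ℕ)
    (hdpos : ∀ i, 0 < d i) (hane : ∀ i, a i ≠ 0)
    (hdind : ∀ k : Fin s → ℤ, (∏ i, (d i : ℚ) ^ k i) = 1 → ∀ i, k i = 0)
    (haind : ∀ k : Fin s → ℤ, (∏ i, a i ^ k i) = 1 → ∀ i, k i = 0)
    (φ : Fin s → Polynomial K) (hφ : ∀ i, φ i = Polynomial.C (a i) * Polynomial.X ^ d i)
    (A : List (Fin s) → Fin s → ℕ)
    (hA : ∀ L : List (Fin s),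
      ((L.map φ).foldr Polynomial.comp Polynomial.X).leadingCoeff = ∏ i, a i ^ A L i)
    (i₀ : Fin s) :
    (∀ L₁ L₂ G : List (Fin s),
      A L₁ i₀ ≤ A L₂ i₀ →
      ((L₁.map φ).foldr Polynomial.comp Polynomial.X).natDegree ≤
        ((L₂.map φ).foldr Polynomial.comp Polynomial.X).natDegree →
      A (L₁ ++ G) i₀ ≤ A (L₂ ++ G) i₀) ∧
    (∀ L : List (Fin s), 1 ≤ L.count i₀ →
      (A L i₀ : ℚ) ≤
        (((d i₀ : ℚ) ^ L.count i₀ - 1) / ((d i₀ : ℚ) - 1)) *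
          ((((L.map φ).foldr Polynomial.comp Polynomial.X).natDegree : ℚ) /
            (d i₀ : ℚ) ^ L.count i₀)) :=
  a_degree_estimates_general a d hdpos hane hdind haind φ hφ A hA i₀
end
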